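/- arXiv:1608.07489 — 5 statements merged into one kernel-verified Lean document; each statement's English description precedes it below -/
import Mathlib

section
/- If G is an edge-critical triangle-free graph, then for every vertex v of G, the independence number of the graph obtained by deleting v and all its neighbours equals α(G) − 1. -/
open SimpleGraph

/-- The independence number of a graph. -/
noncomputable def indepNum {V : Type} (G : SimpleGraph V) : ℕ :=
  sSup {n : ℕ | ∃ s : Set V, s.Finite ∧ s.ncard = n ∧ ∀ a ∈ s, ∀ b ∈ s, ¬ G.Adj a b}

/-- The number of edges of a graph. -/
noncomputable def numEdges {V : Type} (G : SimpleGraph V) : ℕ := G.edgeSet.ncard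

/-- The degree (valency) of a vertex. -/
noncomputable def deg {V : Type} (G : SimpleGraph V) (v : V) : ℕ := (G.neighborSet v).ncard

/-- The second valency `d²(v) = ∑_{w ∈ N(v)} d(w)`. -/
noncomputable def secondDeg {V : Type} (G : SimpleGraph V) (v : V) : ℕ :=
  ∑ᶠ w ∈ G.neighborSet v, deg G w

/-- `p = (a,b,c,d)` is an (ordered) 4-cycle of `G`. -/
def IsC4 {V : Type} (G : SimpleGraph V) (p : V × V × V × V) : Prop :=
  G.Adj p.1 p.2.1 ∧ G.Adj p.2.1 p.2.2.1 ∧ G.Adj p.2.2.1 p.2.2.2 ∧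
    G.Adj p.2.2.2 p.1 ∧ p.1 ≠ p.2.2.1 ∧ p.2.1 ≠ p.2.2.2

/-- The number of 4-cycles of `G`; each 4-cycle yields 8 ordered tuples. -/
noncomputable def numC4 {V : Type} (G : SimpleGraph V) : ℕ :=
  {p : V × V × V × V | IsC4 G p}.ncard / 8

/-- The number of 4-cycles of `G` containing a vertex of `S`. -/
noncomputable def numC4Through {V : Type} (G : SimpleGraph V) (S : Set V) : ℕ :=
  {p : V × V × V × V | IsC4 G p ∧ (p.1 ∈ S ∨ p.2.1 ∈ S ∨ p.2.2.1 ∈ S ∨ p.2.2.2 ∈ S)}.ncard / 8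

/-- The invariant `ν(G) = 3e(G) − 17n(G) + 35α(G) + N(C₄;G)`. -/
noncomputable def nu {V : Type} (G : SimpleGraph V) : ℤ :=
  3 * (numEdges G : ℤ) - 17 * (Nat.card V : ℤ) + 35 * (_root_.indepNum G : ℤ) + (numC4 G : ℤ)

/-- The closed neighbourhood `N[v]`. -/
def closedNbhd {V : Type} (G : SimpleGraph V) (v : V) : Set V := insert v (G.neighborSet v)

/-- `S` destabilises `G` : removing `S` decreases the independence number. -/
def Destab {V : Type} (G : SimpleGraph V) (S : Set V) : Prop :=
  _root_.indepNum (G.induce Sᶜ) < _root_.indepNum G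

/-- `G` is edge-critical (α-critical): removing any edge increases the independence number. -/
def EdgeCritical {V : Type} (G : SimpleGraph V) : Prop :=
  ∀ e ∈ G.edgeSet, _root_.indepNum G < _root_.indepNum (G.deleteEdges {e})

/-!
Deleting `N[v]` lowers `α` by at least one, because `v` extends every independent set of `G_v`.
Conversely, an independent set of `G` through `v` loses only `v` when `N[v]` is deleted, so it is
enough that some maximum independent set contains `v`. If `v` has a neighbour `u`, criticality of
the edge `uv` yields an independent set of `G − uv` of size `α(G) + 1`; it contains both `u` and
`v`, and removing `u` leaves a maximum independent set of `G` through `v`.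
-/

section

variable {V : Type} {G : SimpleGraph V}

lemma isIndepSet_iff_forall_not_adj {s : Set V} :
    G.IsIndepSet s ↔ ∀ a ∈ s, ∀ b ∈ s, ¬ G.Adj a b :=
  ⟨fun hs _ ha _ hb hab => hs ha hb hab.ne hab, fun h _ ha _ hb _ => h _ ha _ hb⟩

lemma indepNum_bddAbove [Finite V] (G : SimpleGraph V) :
    BddAbove {n : ℕ | ∃ s : Set V, s.Finite ∧ s.ncard = n ∧ ∀ a ∈ s, ∀ b ∈ s, ¬ G.Adj a b} :=
  ⟨Nat.card V, by
    rintro n ⟨s, -, rfl, -⟩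
    exact Set.ncard_le_card s⟩

lemma SimpleGraph.IsIndepSet.ncard_le_indepNum [Finite V] {s : Set V} (hs : G.IsIndepSet s) :
    s.ncard ≤ _root_.indepNum G :=
  le_csSup (indepNum_bddAbove G) ⟨s, s.toFinite, rfl, isIndepSet_iff_forall_not_adj.mp hs⟩

lemma exists_isIndepSet_ncard_eq_indepNum [Finite V] (G : SimpleGraph V) :
    ∃ s : Set V, G.IsIndepSet s ∧ s.ncard = _root_.indepNum G := by
  obtain ⟨s, -, hcard, hs⟩ :=
    Nat.sSup_mem (by exact ⟨0, ∅, Set.finite_empty, Set.ncard_empty V, by simp⟩)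
      (indepNum_bddAbove G)
  exact ⟨s, isIndepSet_iff_forall_not_adj.mpr hs, hcard⟩

lemma SimpleGraph.IsIndepSet.ncard_le_indepNum_induce [Finite V] {s T : Set V}
    (hs : G.IsIndepSet s) (hsT : s ⊆ T) : s.ncard ≤ _root_.indepNum (G.induce T) := by
  have hpre : (G.induce T).IsIndepSet (Subtype.val ⁻¹' s) :=
    fun _ ha _ hb hne => hs ha hb (Subtype.val_injective.ne hne)
  calc s.ncard = (Subtype.val ⁻¹' s : Set T).ncard := by
        rw [← Set.ncard_image_of_injective _ Subtype.val_injective,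
          Set.image_preimage_eq_of_subset (by simpa using hsT)]
    _ ≤ _ := hpre.ncard_le_indepNum

lemma exists_isIndepSet_subset_ncard_eq_indepNum_induce [Finite V] (G : SimpleGraph V)
    (T : Set V) : ∃ s ⊆ T, G.IsIndepSet s ∧ s.ncard = _root_.indepNum (G.induce T) := by
  obtain ⟨s, hs, hcard⟩ := exists_isIndepSet_ncard_eq_indepNum (G.induce T)
  refine ⟨Subtype.val '' s, by simp, ?_, ?_⟩
  · rintro _ ⟨a, ha, rfl⟩ _ ⟨b, hb, rfl⟩ hne
    exact hs ha hb (ne_of_apply_ne _ hne)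
  · rwa [Set.ncard_image_of_injective _ Subtype.val_injective]

lemma SimpleGraph.IsIndepSet.sdiff_singleton_subset_compl_closedNbhd {s : Set V}
    (hs : G.IsIndepSet s) {v : V} (hv : v ∈ s) : s \ {v} ⊆ (closedNbhd G v)ᶜ := by
  rintro x ⟨hx, hxv⟩ (rfl | hvx)
  · exact hxv rfl
  · exact hs hv hx (Ne.symm hxv) hvx

lemma destab_closedNbhd [Finite V] (G : SimpleGraph V) (v : V) : Destab G (closedNbhd G v) := by
  obtain ⟨s, hsT, hs, hcard⟩ :=
    exists_isIndepSet_subset_ncard_eq_indepNum_induce G (closedNbhd G v)ᶜ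
  have hvs : v ∉ s := fun hv => hsT hv (Set.mem_insert v _)
  have hins : G.IsIndepSet (insert v s) := hs.insert fun x hx _ =>
    ⟨fun hvx => hsT hx (Set.mem_insert_of_mem v hvx),
      fun hxv => hsT hx (Set.mem_insert_of_mem v hxv.symm)⟩
  have := hins.ncard_le_indepNum
  rwa [Set.ncard_insert_of_notMem hvs, hcard] at this

lemma indepNum_le_indepNum_induce_compl_closedNbhd_add_one [Finite V] {s : Set V}
    (hs : G.IsIndepSet s) {v : V} (hv : v ∈ s) (hcard : _root_.indepNum G ≤ s.ncard) :
    _root_.indepNum G ≤ _root_.indepNum (G.induce (closedNbhd G v)ᶜ) + 1 := by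
  have hs' : G.IsIndepSet (s \ {v}) := hs.mono Set.sdiff_subset
  have := hs'.ncard_le_indepNum_induce (hs.sdiff_singleton_subset_compl_closedNbhd hv)
  rw [Set.ncard_sdiff_singleton_of_mem hv] at this
  omega

lemma SimpleGraph.IsIndepSet.of_deleteEdges_singleton {s : Set V} {e : Sym2 V}
    (hs : (G.deleteEdges {e}).IsIndepSet s) (he : ∃ x ∈ e, x ∉ s) : G.IsIndepSet s := by
  intro a ha b hb hne hab
  refine hs ha hb hne (deleteEdges_adj.mpr ⟨hab, fun hae => ?_⟩)
  obtain ⟨x, hx, hxs⟩ := he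
  rw [← Set.mem_singleton_iff.mp hae, Sym2.mem_iff] at hx
  rcases hx with rfl | rfl
  exacts [hxs ha, hxs hb]

lemma EdgeCritical.exists_isIndepSet_mem_of_adj [Finite V] (hec : EdgeCritical G) {u v : V}
    (huv : G.Adj u v) : ∃ s, G.IsIndepSet s ∧ v ∈ s ∧ _root_.indepNum G ≤ s.ncard := by
  obtain ⟨s, hs, hcard⟩ := exists_isIndepSet_ncard_eq_indepNum (G.deleteEdges {s(u, v)})
  have hlt := hec s(u, v) huv
  have hmem : ∀ x ∈ s(u, v), x ∈ s := by
    by_contra! hout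
    have := (hs.of_deleteEdges_singleton hout).ncard_le_indepNum
    omega
  have hs' : (G.deleteEdges {s(u, v)}).IsIndepSet (s \ {u}) := hs.mono Set.sdiff_subset
  refine ⟨s \ {u}, hs'.of_deleteEdges_singleton ⟨u, Sym2.mem_mk_left u v, fun hu => hu.2 rfl⟩,
    ⟨hmem v (Sym2.mem_mk_right u v), huv.ne'⟩, ?_⟩
  rw [Set.ncard_sdiff_singleton_of_mem (hmem u (Sym2.mem_mk_left u v))]
  omega

lemma EdgeCritical.exists_isIndepSet_mem [Finite V] (hec : EdgeCritical G) (v : V) :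
    ∃ s, G.IsIndepSet s ∧ v ∈ s ∧ _root_.indepNum G ≤ s.ncard := by
  by_cases hadj : ∃ u, G.Adj u v
  · obtain ⟨u, huv⟩ := hadj
    exact hec.exists_isIndepSet_mem_of_adj huv
  · push Not at hadj
    obtain ⟨s, hs, hcard⟩ := exists_isIndepSet_ncard_eq_indepNum G
    exact ⟨insert v s, hs.insert fun u _ _ => ⟨fun hvu => hadj u hvu.symm, hadj u⟩,
      Set.mem_insert v s, hcard ▸ Set.ncard_le_ncard (Set.subset_insert v s)⟩

end

theorem stmt0_general {V : Type} [Fintype V] (G : SimpleGraph V)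
    (hec : EdgeCritical G) (v : V) :
    _root_.indepNum (G.induce (closedNbhd G v)ᶜ) = _root_.indepNum G - 1 := by
  have hlt : _root_.indepNum (G.induce (closedNbhd G v)ᶜ) < _root_.indepNum G :=
    destab_closedNbhd G v
  obtain ⟨s, hs, hv, hcard⟩ := hec.exists_isIndepSet_mem v
  have hle := indepNum_le_indepNum_induce_compl_closedNbhd_add_one hs hv hcard
  omega

/-- If `G` is an edge-critical triangle-free graph, then for every vertex `v`,
`α(G_v) = α(G) − 1`, where `G_v` is obtained by deleting `N[v]`. -/
theorem stmt0 {V : Type} [Fintype V] (G : SimpleGraph V) (h3 : G.CliqueFree 3)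
    (hec : EdgeCritical G) (v : V) :
    _root_.indepNum (G.induce (closedNbhd G v)ᶜ) = _root_.indepNum G - 1 :=
  stmt0_general G hec v
end

section
/- If G is a triangle-free graph, v a vertex of G, and the set N_2(v) of vertices at distance exactly two from v does not destabilise G_v (i.e., there is a maximum independent set of G_v avoiding N_2(v)), then α(G) ≥ α(G_v) + deg(v). -/
open SimpleGraph

lemma indep_bdd {V : Type} [Finite V] (G : SimpleGraph V) :
    BddAbove {n : ℕ | ∃ s : Set V, s.Finite ∧ s.ncard = n ∧ ∀ a ∈ s, ∀ b ∈ s, ¬ G.Adj a b} := by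
  refine ⟨Nat.card V, fun n hn => ?_⟩
  obtain ⟨s, hf, rfl, -⟩ := hn
  calc s.ncard ≤ (Set.univ : Set V).ncard := Set.ncard_le_ncard s.subset_univ Set.finite_univ
  _ = Nat.card V := Set.ncard_univ V

lemma indep_le {V : Type} [Finite V] (G : SimpleGraph V) (s : Set V)
    (hs : ∀ a ∈ s, ∀ b ∈ s, ¬ G.Adj a b) : s.ncard ≤ _root_.indepNum G :=
  le_csSup (indep_bdd G) ⟨s, s.toFinite, rfl, hs⟩

lemma exists_indep {V : Type} [Finite V] (G : SimpleGraph V) :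
    ∃ s : Set V, (∀ a ∈ s, ∀ b ∈ s, ¬ G.Adj a b) ∧ s.ncard = _root_.indepNum G := by
  have hne : {n : ℕ | ∃ s : Set V, s.Finite ∧ s.ncard = n ∧ ∀ a ∈ s, ∀ b ∈ s, ¬ G.Adj a b}.Nonempty :=
    ⟨0, ∅, Set.finite_empty, by simp, by simp⟩
  obtain ⟨s, -, hcard, hind⟩ := Nat.sSup_mem hne (indep_bdd G)
  exact ⟨s, hind, hcard⟩

/-- If `G` is triangle-free and `N₂(v)` does not destabilise `G_v`,
then `α(G) ≥ α(G_v) + deg(v)`. -/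
theorem stmt1 {V : Type} [Fintype V] (G : SimpleGraph V) (h3 : G.CliqueFree 3) (v : V)
    (h : ¬ Destab (G.induce (closedNbhd G v)ᶜ) {u | G.dist v ↑u = 2}) :
    _root_.indepNum (G.induce (closedNbhd G v)ᶜ) + deg G v ≤ _root_.indepNum G := by
  classical
  rw [Destab, not_lt] at h
  set Gv := G.induce (closedNbhd G v)ᶜ with hGv
  set N2 : Set ↥(closedNbhd G v)ᶜ := {u : ↥(closedNbhd G v)ᶜ | G.dist v ↑u = 2} with hN2
  obtain ⟨T, hTind, hTcard⟩ := exists_indep (Gv.induce N2ᶜ)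
  -- image of T in V
  set f : ↥N2ᶜ → V := fun x => ((x : ↥(closedNbhd G v)ᶜ) : V) with hf
  set S : Set V := f '' T with hS
  have hinj : Function.Injective f :=
    Subtype.val_injective.comp Subtype.val_injective
  have hScard : S.ncard = T.ncard := Set.ncard_image_of_injective T hinj
  have hSsub : ∀ x ∈ S, x ∈ (closedNbhd G v)ᶜ ∧ G.dist v x ≠ 2 := by
    rintro x ⟨y, hy, rfl⟩
    exact ⟨(y : ↥(closedNbhd G v)ᶜ).2, y.2⟩
  have hSind : ∀ a ∈ S, ∀ b ∈ S, ¬ G.Adj a b := by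
    rintro a ⟨y, hy, rfl⟩ b ⟨z, hz, rfl⟩ hadj
    exact hTind y hy z hz hadj
  -- the independent set S ∪ N(v)
  have hdisj : Disjoint S (G.neighborSet v) := by
    rw [Set.disjoint_left]
    intro x hx hxn
    exact (hSsub x hx).1 (Set.mem_insert_of_mem _ hxn)
  have hunion : ∀ a ∈ S ∪ G.neighborSet v, ∀ b ∈ S ∪ G.neighborSet v, ¬ G.Adj a b := by
    have key : ∀ a ∈ S, ∀ b ∈ G.neighborSet v, ¬ G.Adj a b := by
      intro a ha b hb hadj
      obtain ⟨hac, had⟩ := hSsub a ha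
      apply had
      have hav : a ≠ v := by
        intro hav; exact hac (by rw [hav]; exact Set.mem_insert _ _)
      have hle : G.dist v a ≤ 2 := by
        have := SimpleGraph.dist_le (SimpleGraph.Walk.cons hb hadj.symm.toWalk)
        exact this
      have h0 : G.dist v a ≠ 0 := by
        intro h0
        rcases (SimpleGraph.dist_eq_zero_iff_eq_or_not_reachable).1 h0 with h1 | h1
        · exact hav h1.symm
        · exact h1 ⟨SimpleGraph.Walk.cons hb hadj.symm.toWalk⟩
      have h1 : G.dist v a ≠ 1 := by
        intro h1
        exact hac (Set.mem_insert_of_mem _ (SimpleGraph.dist_eq_one_iff_adj.1 h1))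
      omega
    rintro a (ha | ha) b (hb | hb) hadj
    · exact hSind a ha b hb hadj
    · exact key a ha b hb hadj
    · exact key b hb a ha hadj.symm
    · exact h3 {v, a, b} (SimpleGraph.is3Clique_triple_iff.2 ⟨ha, hb, hadj⟩)
  have hcard : (S ∪ G.neighborSet v).ncard = S.ncard + deg G v := by
    rw [Set.ncard_union_eq hdisj S.toFinite (G.neighborSet v).toFinite]; rfl
  have hfinal := indep_le G _ hunion
  rw [hcard] at hfinal
  calc _root_.indepNum Gv + deg G v
      ≤ _root_.indepNum (Gv.induce N2ᶜ) + deg G v := by omega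
    _ = T.ncard + deg G v := by rw [hTcard]
    _ = S.ncard + deg G v := by rw [hScard]
    _ ≤ _root_.indepNum G := hfinal
end

section
/- If G is a graph with no cycles of length 3 or 4 and C is a k-cycle in G, then every vertex v outside C has at most ⌊k/3⌋ neighbours on C. -/
open SimpleGraph

/-- In a graph without 3- or 4-cycles, a vertex outside a `k`-cycle has at most `⌊k/3⌋`
neighbours on the cycle. -/
theorem stmt9 {V : Type} [Fintype V] (G : SimpleGraph V) (h3 : G.CliqueFree 3)
    (h4 : ∀ a b c d : V, G.Adj a b → G.Adj b c → G.Adj c d → G.Adj d a → a = c ∨ b = d)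
    (k : ℕ) (hk : 3 ≤ k) (c : ZMod k → V) (hinj : Function.Injective c)
    (hcyc : ∀ i : ZMod k, G.Adj (c i) (c (i + 1)))
    (v : V) (hv : ∀ i, v ≠ c i) :
    {u | G.Adj v u ∧ ∃ i, c i = u}.ncard ≤ k / 3 := by
  classical
  haveI : NeZero k := ⟨by omega⟩
  set S : Set (ZMod k) := {i | G.Adj v (c i)} with hS
  have himg : {u | G.Adj v u ∧ ∃ i, c i = u} = c '' S := by
    ext u
    constructor
    · rintro ⟨ha, i, rfl⟩; exact ⟨i, ha, rfl⟩
    · rintro ⟨i, hi, rfl⟩; exact ⟨hi, i, rfl⟩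
  rw [himg, Set.ncard_image_of_injective _ hinj]
  have key1 : ∀ i ∈ S, i + 1 ∉ S := by
    intro i hi h1
    exact h3 {v, c i, c (i + 1)} (SimpleGraph.is3Clique_triple_iff.mpr ⟨hi, h1, hcyc i⟩)
  have key2 : ∀ i ∈ S, i + 2 ∉ S := by
    intro i hi h2
    have h21 : G.Adj (c (i + 1)) (c (i + 2)) := by
      have := hcyc (i + 1); rwa [add_assoc, one_add_one_eq_two] at this
    rcases h4 v (c i) (c (i + 1)) (c (i + 2)) hi (hcyc i) h21 h2.symm with h | h
    · exact hv (i + 1) h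
    · have : i = i + 2 := hinj h
      have h20 : (2 : ZMod k) = 0 := by linear_combination -this
      have hdvd : (k : ℕ) ∣ 2 := by
        exact_mod_cast (ZMod.natCast_eq_zero_iff 2 k).mp (by exact_mod_cast h20)
      exact absurd (Nat.le_of_dvd (by norm_num) hdvd) (by omega)
  have hcard : S.ncard = S.toFinset.card := S.ncard_eq_toFinset_card'
  set T := S.toFinset with hT
  set T1 := T.image (· + 1) with hT1
  set T2 := T.image (· + 2) with hT2
  have hmemT : ∀ x, x ∈ T ↔ x ∈ S := fun x => Set.mem_toFinset
  have d1 : Disjoint T T1 := by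
    rw [Finset.disjoint_left]
    intro x hx hx1
    obtain ⟨s, hs, rfl⟩ := Finset.mem_image.mp hx1
    exact key1 s ((hmemT s).mp hs) ((hmemT _).mp hx)
  have d2 : Disjoint T T2 := by
    rw [Finset.disjoint_left]
    intro x hx hx2
    obtain ⟨s, hs, rfl⟩ := Finset.mem_image.mp hx2
    exact key2 s ((hmemT s).mp hs) ((hmemT _).mp hx)
  have d12 : Disjoint T1 T2 := by
    rw [Finset.disjoint_left]
    intro x hx1 hx2
    obtain ⟨s, hs, rfl⟩ := Finset.mem_image.mp hx1
    obtain ⟨t, ht, hts⟩ := Finset.mem_image.mp hx2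
    have hst : s = t + 1 := by
      have : t + 2 = s + 1 := hts
      linear_combination -this
    exact key1 t ((hmemT t).mp ht) (hst ▸ (hmemT s).mp hs)
  have hc1 : T1.card = T.card := Finset.card_image_of_injective _ (add_left_injective 1)
  have hc2 : T2.card = T.card := Finset.card_image_of_injective _ (add_left_injective 2)
  have hle : T.card + T1.card + T2.card ≤ k := by
    have hd : Disjoint (T ∪ T1) T2 := Finset.disjoint_union_left.mpr ⟨d2, d12⟩
    calc T.card + T1.card + T2.card = ((T ∪ T1) ∪ T2).card := by
          rw [Finset.card_union_of_disjoint hd, Finset.card_union_of_disjoint d1]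
      _ ≤ Fintype.card (ZMod k) := Finset.card_le_univ _
      _ = k := ZMod.card k
  rw [hcard]
  omega
end

section
/- For every k ≥ 2 the chain graph Ch_k satisfies n(Ch_k) = 3k − 1, e(Ch_k) = 5k − 5, α(Ch_k) = k, and N(C_4; Ch_k) = k − 2; consequently ν(Ch_k) = 3e − 17n + 35α + N(C_4) = 0. -/
open SimpleGraph

/-- The cycle graph on `ZMod m`. -/
def cycZ (m : ℕ) : SimpleGraph (ZMod m) := SimpleGraph.fromRel (fun i j => j = i + 1)

/-- `IsChainGraph G k` : `G` is (a copy of) the chain graph `Ch_k`.  `Ch_2 = C_5` and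
`Ch_{k+1}` is obtained from `Ch_k` by picking a bivalent vertex `x` and adding new
vertices `v, w₁, w₂` with edges `vw₁`, `vw₂`, `w₁x` and `w₂y` for every `y ∈ N(x)`. -/
inductive IsChainGraph : {V : Type} → SimpleGraph V → ℕ → Prop where
  | base {V : Type} (G : SimpleGraph V) (e : G ≃g cycZ 5) : IsChainGraph G 2
  | step {V : Type} (G : SimpleGraph V) (k : ℕ) (v w1 w2 x : V)
      (hvw1 : v ≠ w1) (hvw2 : v ≠ w2) (hw12 : w1 ≠ w2)
      (hx : x ∉ ({v, w1, w2} : Set V))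
      (hchain : IsChainGraph (G.induce ({v, w1, w2} : Set V)ᶜ) k)
      (hdeg : deg (G.induce ({v, w1, w2} : Set V)ᶜ) ⟨x, hx⟩ = 2)
      (hv : ∀ u, G.Adj v u ↔ u = w1 ∨ u = w2)
      (hw1 : ∀ u, G.Adj w1 u ↔ u = v ∨ u = x)
      (hw2 : ∀ u, G.Adj w2 u ↔ u = v ∨ (u ∉ ({v, w1, w2} : Set V) ∧ G.Adj x u)) :
      IsChainGraph G (k + 1)

/-! ### Auxiliary material -/

set_option maxRecDepth 40000

section IndepHelpers
variable {V : Type} (G : SimpleGraph V)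

lemma indep_bddAbove [Finite V] :
    BddAbove {n : ℕ | ∃ s : Set V, s.Finite ∧ s.ncard = n ∧ ∀ a ∈ s, ∀ b ∈ s, ¬ G.Adj a b} := by
  refine ⟨Nat.card V, ?_⟩
  rintro n ⟨s, hf, rfl, hi⟩
  simpa [Set.ncard_univ] using Set.ncard_le_ncard (Set.subset_univ s) Set.finite_univ

lemma indep_nonempty :
    Set.Nonempty {n : ℕ | ∃ s : Set V, s.Finite ∧ s.ncard = n ∧ ∀ a ∈ s, ∀ b ∈ s, ¬ G.Adj a b} :=
  ⟨0, ∅, Set.finite_empty, by simp, by simp⟩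

lemma le_indepNum [Finite V] (s : Set V) (hi : ∀ a ∈ s, ∀ b ∈ s, ¬ G.Adj a b) :
    s.ncard ≤ _root_.indepNum G :=
  le_csSup (indep_bddAbove G) ⟨s, Set.toFinite s, rfl, hi⟩

lemma indepNum_le (n : ℕ)
    (h : ∀ s : Set V, s.Finite → (∀ a ∈ s, ∀ b ∈ s, ¬ G.Adj a b) → s.ncard ≤ n) :
    _root_.indepNum G ≤ n :=
  csSup_le (indep_nonempty G) (by rintro m ⟨s, hf, rfl, hi⟩; exact h s hf hi)

lemma exists_max_indep [Finite V] :
    ∃ s : Set V, (∀ a ∈ s, ∀ b ∈ s, ¬ G.Adj a b) ∧ s.ncard = _root_.indepNum G := by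
  obtain ⟨s, hf, hc, hi⟩ := Nat.sSup_mem (indep_nonempty G) (indep_bddAbove G)
  exact ⟨s, hi, hc⟩
end IndepHelpers

section IsoTransfer
variable {V W : Type} {G : SimpleGraph V} {H : SimpleGraph W}

lemma card_iso (e : G ≃g H) : Nat.card V = Nat.card W := Nat.card_congr e.toEquiv

lemma numEdges_iso (e : G ≃g H) : numEdges G = numEdges H := by
  unfold numEdges
  rw [← Nat.card_coe_set_eq, ← Nat.card_coe_set_eq]
  exact Nat.card_congr e.mapEdgeSet

lemma deg_iso (e : G ≃g H) (z : V) : deg G z = deg H (e z) := by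
  unfold deg
  rw [← Nat.card_coe_set_eq, ← Nat.card_coe_set_eq]
  exact Nat.card_congr (e.mapNeighborSet z)

lemma indep_subset_iso (e : G ≃g H) {s : Set V} (hi : ∀ a ∈ s, ∀ b ∈ s, ¬ G.Adj a b) :
    ∀ a ∈ e '' s, ∀ b ∈ e '' s, ¬ H.Adj a b := by
  rintro a ⟨a', ha', rfl⟩ b ⟨b', hb', rfl⟩ hadj
  exact hi a' ha' b' hb' (e.map_adj_iff.mp hadj)

lemma indepNum_iso (e : G ≃g H) : _root_.indepNum G = _root_.indepNum H := by
  unfold _root_.indepNum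
  congr 1
  ext n
  constructor
  · rintro ⟨s, hf, rfl, hi⟩
    exact ⟨e '' s, hf.image _, (Set.ncard_image_of_injective s e.toEquiv.injective).symm ▸ rfl,
      indep_subset_iso e hi⟩
  · rintro ⟨s, hf, rfl, hi⟩
    refine ⟨e.symm '' s, hf.image _, ?_, indep_subset_iso e.symm hi⟩
    exact Set.ncard_image_of_injective s e.symm.toEquiv.injective

noncomputable def tupEquiv (e : G ≃g H) : (V × V × V × V) ≃ (W × W × W × W) :=
  e.toEquiv.prodCongr (e.toEquiv.prodCongr (e.toEquiv.prodCongr e.toEquiv))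

lemma c4_mem (e : G ≃g H) (p : V × V × V × V) : IsC4 H (tupEquiv e p) ↔ IsC4 G p := by
  obtain ⟨a, b, c, d⟩ := p
  simp only [IsC4, tupEquiv, Equiv.prodCongr_apply, Prod.map]
  have hadj : ∀ a b : V, H.Adj (e.toEquiv a) (e.toEquiv b) ↔ G.Adj a b := fun a b => e.map_adj_iff
  rw [hadj, hadj, hadj, hadj, e.toEquiv.injective.ne_iff, e.toEquiv.injective.ne_iff]

lemma c4_iso (e : G ≃g H) :
    {p : V × V × V × V | IsC4 G p}.ncard = {p : W × W × W × W | IsC4 H p}.ncard := by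
  have hpre : {p : V × V × V × V | IsC4 G p} = tupEquiv e ⁻¹' {p | IsC4 H p} := by
    ext p; simp [c4_mem e p]
  rw [hpre, Set.ncard_preimage_of_injective_subset_range (tupEquiv e).injective
    (by rw [Equiv.range_eq_univ]; exact Set.subset_univ _)]
end IsoTransfer

section Cyc5
instance : DecidableRel (cycZ 5).Adj := fun a b =>
  decidable_of_iff' _ (SimpleGraph.fromRel_adj _ a b)

lemma cyc5_numEdges : numEdges (cycZ 5) = 5 := by
  have : numEdges (cycZ 5) = (cycZ 5).edgeFinset.card := by
    rw [numEdges, SimpleGraph.edgeFinset, Set.ncard_eq_toFinset_card']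
  rw [this]; decide

lemma cyc5_deg : ∀ z : ZMod 5, deg (cycZ 5) z = 2 := by
  have key : ∀ z : ZMod 5, ((cycZ 5).neighborFinset z).card = 2 := by decide
  intro z
  have : deg (cycZ 5) z = ((cycZ 5).neighborFinset z).card := by
    rw [deg, SimpleGraph.neighborFinset, Set.ncard_eq_toFinset_card']
  rw [this]; exact key z

lemma cyc5_c4 : {p : ZMod 5 × ZMod 5 × ZMod 5 × ZMod 5 | IsC4 (cycZ 5) p}.ncard = 0 := by
  have h : ∀ p, ¬ IsC4 (cycZ 5) p := by unfold IsC4; decide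
  rw [Set.ncard_eq_zero (Set.toFinite _)]
  ext p; simp [h p]

lemma cyc5_indep : _root_.indepNum (cycZ 5) = 2 := by
  apply IsGreatest.csSup_eq
  constructor
  · refine ⟨↑({0, 2} : Finset (ZMod 5)), (Set.toFinite _), ?_, ?_⟩
    · rw [Set.ncard_coe_finset]; decide
    · intro a ha b hb
      revert a b
      simp only [Finset.coe_insert, Finset.coe_singleton, Set.mem_insert_iff,
        Set.mem_singleton_iff]
      decide
  · rintro n ⟨s, hf, rfl, hi⟩
    rw [Set.ncard_eq_toFinset_card _ hf]
    have key : ∀ t : Finset (ZMod 5), (∀ a ∈ t, ∀ b ∈ t, ¬ (cycZ 5).Adj a b) → t.card ≤ 2 := by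
      decide
    exact key _ (fun a ha b hb => hi a (by simpa using ha) b (by simpa using hb))

lemma cyc5_biv : ∀ z a b c : ZMod 5, (cycZ 5).Adj z a → (cycZ 5).Adj z b → a ≠ b →
    (cycZ 5).Adj c a → (cycZ 5).Adj c b → c = z := by
  have h : ∀ z a b c : ZMod 5, ¬((cycZ 5).Adj z a ∧ (cycZ 5).Adj z b ∧ a ≠ b ∧
      (cycZ 5).Adj c a ∧ (cycZ 5).Adj c b ∧ c ≠ z) := by decide
  intro z a b c h1 h2 h3 h4 h5
  by_contra hne
  exact h z a b c ⟨h1, h2, h3, h4, h5, hne⟩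
end Cyc5

/-- The bundle of facts we prove by induction on the chain structure. -/
structure Good {V : Type} (G : SimpleGraph V) (k : ℕ) : Prop where
  card : Nat.card V = 3 * k - 1
  edges : numEdges G = 5 * k - 5
  indep : _root_.indepNum G = k
  c4 : {p : V × V × V × V | IsC4 G p}.ncard = 8 * (k - 2)
  mindeg : ∀ z, 2 ≤ deg G z
  biv : ∀ z a b c, deg G z = 2 → G.Adj z a → G.Adj z b → a ≠ b →
    G.Adj c a → G.Adj c b → c = z

lemma isC4_rot {V : Type} {G : SimpleGraph V} {a b c d : V}
    (h : IsC4 G (a, b, c, d)) : IsC4 G (b, c, d, a) := by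
  obtain ⟨h1, h2, h3, h4, h5, h6⟩ := h
  exact ⟨h2, h3, h4, h1, h6, h5.symm⟩

lemma good_base {V : Type} (G : SimpleGraph V) (e : G ≃g cycZ 5) :
    Finite V ∧ Good G 2 := by
  have hfin : Finite V := Finite.of_equiv (ZMod 5) e.toEquiv.symm
  refine ⟨hfin, ?_, ?_, ?_, ?_, ?_, ?_⟩
  · rw [card_iso e]; simp [Nat.card_eq_fintype_card]
  · rw [numEdges_iso e, cyc5_numEdges]
  · rw [indepNum_iso e, cyc5_indep]
  · rw [c4_iso e, cyc5_c4]
  · intro z; rw [deg_iso e z, cyc5_deg]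
  · intro z a b c hd hza hzb hab hca hcb
    have := cyc5_biv (e z) (e a) (e b) (e c)
      (e.map_adj_iff.mpr hza) (e.map_adj_iff.mpr hzb)
      (e.toEquiv.injective.ne hab) (e.map_adj_iff.mpr hca) (e.map_adj_iff.mpr hcb)
    exact e.toEquiv.injective this

lemma good_step {V : Type} (G : SimpleGraph V) (k : ℕ) (v w1 w2 x : V)
    (hvw1 : v ≠ w1) (hvw2 : v ≠ w2) (hw12 : w1 ≠ w2)
    (hx : x ∉ ({v, w1, w2} : Set V))
    (hdeg : deg (G.induce ({v, w1, w2} : Set V)ᶜ) ⟨x, hx⟩ = 2)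
    (hv : ∀ u, G.Adj v u ↔ u = w1 ∨ u = w2)
    (hw1 : ∀ u, G.Adj w1 u ↔ u = v ∨ u = x)
    (hw2 : ∀ u, G.Adj w2 u ↔ u = v ∨ (u ∉ ({v, w1, w2} : Set V) ∧ G.Adj x u))
    (hk2 : 2 ≤ k) (hfin' : Finite ↥(({v, w1, w2} : Set V)ᶜ))
    (good' : Good (G.induce ({v, w1, w2} : Set V)ᶜ) k) :
    Finite V ∧ Good G (k + 1) := by
  classical
  set S : Set V := {v, w1, w2} with hS
  set G' := G.induce Sᶜ with hG'
  -- basic distinctness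
  have hxv : x ≠ v := fun h => hx (by simp [hS, h])
  have hxw1 : x ≠ w1 := fun h => hx (by simp [hS, h])
  have hxw2 : x ≠ w2 := fun h => hx (by simp [hS, h])
  -- basic adjacencies
  have hAvw1 : G.Adj v w1 := (hv w1).mpr (Or.inl rfl)
  have hAvw2 : G.Adj v w2 := (hv w2).mpr (Or.inr rfl)
  have hAw1x : G.Adj w1 x := (hw1 x).mpr (Or.inr rfl)
  have hnAxw2 : ¬ G.Adj x w2 := by
    intro h
    rcases (hw2 x).mp h.symm with h' | ⟨_, h'⟩
    · exact hxv h'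
    · exact G.irrefl h'
  have hnAvx : ¬ G.Adj v x := by
    intro h
    rcases (hv x).mp h with h' | h' <;> [exact hxw1 h'; exact hxw2 h']
  have hnAw1w2 : ¬ G.Adj w1 w2 := by
    intro h
    rcases (hw1 w2).mp h with h' | h' <;> [exact hvw2 h'.symm; exact hxw2 h'.symm]
  -- adjacency in the induced graph
  have hadj' : ∀ u w : ↥Sᶜ, G'.Adj u w ↔ G.Adj ↑u ↑w := fun u w => Iff.rfl
  -- the two old neighbours of x
  obtain ⟨a0, b0, hab0, hnb0⟩ := Set.ncard_eq_two.mp hdeg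
  set y1 : V := ↑a0 with hy1def
  set y2 : V := ↑b0 with hy2def
  have hy1S : y1 ∉ S := a0.2
  have hy2S : y2 ∉ S := b0.2
  have hy12 : y1 ≠ y2 := fun h => hab0 (Subtype.ext h)
  have hAxy1 : G.Adj x y1 := by
    have : a0 ∈ G'.neighborSet ⟨x, hx⟩ := by rw [hnb0]; exact Set.mem_insert _ _
    exact this
  have hAxy2 : G.Adj x y2 := by
    have : b0 ∈ G'.neighborSet ⟨x, hx⟩ := by rw [hnb0]; simp
    exact this
  have hxy1 : x ≠ y1 := hAxy1.ne
  have hxy2 : x ≠ y2 := hAxy2.ne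
  -- full neighbourhood of x
  have hxnb : ∀ u, G.Adj x u ↔ u = w1 ∨ u = y1 ∨ u = y2 := by
    intro u
    constructor
    · intro h
      by_cases hu : u ∈ S
      · rcases hu with rfl | rfl | rfl
        · exact absurd h.symm hnAvx
        · exact Or.inl rfl
        · exact absurd h hnAxw2
      · have : (⟨u, hu⟩ : ↥Sᶜ) ∈ G'.neighborSet ⟨x, hx⟩ := h
        rw [hnb0] at this
        rcases this with h' | h'
        · exact Or.inr (Or.inl (congrArg Subtype.val h'))
        · exact Or.inr (Or.inr (congrArg Subtype.val h'))
    · rintro (rfl | rfl | rfl)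
      · exact hAw1x.symm
      · exact hAxy1
      · exact hAxy2
  -- full neighbourhood of w2
  have hw2nb : ∀ u, G.Adj w2 u ↔ u = v ∨ u = y1 ∨ u = y2 := by
    intro u
    rw [hw2 u]
    constructor
    · rintro (rfl | ⟨huS, hu⟩)
      · exact Or.inl rfl
      · rcases (hxnb u).mp hu with rfl | h' | h'
        · exact absurd (by simp [hS]) huS
        · exact Or.inr (Or.inl h')
        · exact Or.inr (Or.inr h')
    · rintro (rfl | rfl | rfl)
      · exact Or.inl rfl
      · exact Or.inr ⟨hy1S, hAxy1⟩
      · exact Or.inr ⟨hy2S, hAxy2⟩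
  have hAw2y1 : G.Adj w2 y1 := (hw2nb y1).mpr (Or.inr (Or.inl rfl))
  have hAw2y2 : G.Adj w2 y2 := (hw2nb y2).mpr (Or.inr (Or.inr rfl))
  have hy1v : y1 ≠ v := fun h => hy1S (by simp [hS, h])
  have hy1w1 : y1 ≠ w1 := fun h => hy1S (by simp [hS, h])
  have hy1w2 : y1 ≠ w2 := fun h => hy1S (by simp [hS, h])
  have hy2v : y2 ≠ v := fun h => hy2S (by simp [hS, h])
  have hy2w1 : y2 ≠ w1 := fun h => hy2S (by simp [hS, h])
  have hy2w2 : y2 ≠ w2 := fun h => hy2S (by simp [hS, h])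
  -- finiteness
  have hScF : (Sᶜ : Set V).Finite := Set.finite_coe_iff.mp hfin'
  have hSF : S.Finite := (Set.finite_singleton w2).insert w1 |>.insert v
  have hfinV : Finite V := by
    rw [← Set.finite_univ_iff, ← Set.compl_union_self S]
    exact hScF.union hSF
  haveI := hfinV
  haveI := hfin'
  -- symmetric distinctness helpers
  have hw1v := hvw1.symm
  have hw2v := hvw2.symm
  have hw2w1 := hw12.symm
  have hvx := hxv.symm
  have hw1x := hxw1.symm
  have hw2x := hxw2.symm
  have hy1x := hxy1.symm
  have hy2x := hxy2.symm
  have hy21 := hy12.symm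
  have hvy1 := hy1v.symm
  have hw1y1 := hy1w1.symm
  have hw2y1 := hy1w2.symm
  have hvy2 := hy2v.symm
  have hw1y2 := hy2w1.symm
  have hw2y2' := hy2w2.symm
  -- vertex count
  have hcard : Nat.card V = 3 * (k + 1) - 1 := by
    have h1 : (Sᶜ : Set V).ncard = 3 * k - 1 := by
      rw [← Nat.card_coe_set_eq]; exact good'.card
    have h2 : S.ncard = 3 := by
      rw [hS, Set.ncard_insert_of_notMem (by simp [hvw1, hvw2]) (Set.toFinite _),
        Set.ncard_pair hw12]
    have h3 := Set.ncard_add_ncard_compl S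
    omega
  -- edge count
  set ι : ↥Sᶜ → V := Subtype.val with hι
  have hinj : Function.Injective ι := Subtype.val_injective
  set E1 := Sym2.map ι '' G'.edgeSet with hE1
  set E2 : Set (Sym2 V) := {s(v,w1), s(v,w2), s(w1,x), s(w2,y1), s(w2,y2)} with hE2
  have hedges : numEdges G = 5 * (k + 1) - 5 := by
    have hE2sub : ∀ α β, G.Adj α β → α ∈ S → s(α,β) ∈ E2 := by
      intro α β hadj hα
      simp only [hE2, Set.mem_insert_iff, Set.mem_singleton_iff]
      rcases hα with rfl | rfl | rfl
      · rcases (hv β).mp hadj with rfl | rfl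
        · exact Or.inl rfl
        · exact Or.inr (Or.inl rfl)
      · rcases (hw1 β).mp hadj with rfl | rfl
        · exact Or.inl Sym2.eq_swap
        · exact Or.inr (Or.inr (Or.inl rfl))
      · rcases (hw2nb β).mp hadj with rfl | rfl | rfl
        · exact Or.inr (Or.inl Sym2.eq_swap)
        · exact Or.inr (Or.inr (Or.inr (Or.inl rfl)))
        · exact Or.inr (Or.inr (Or.inr (Or.inr rfl)))
    have hE : G.edgeSet = E1 ∪ E2 := by
      ext e
      induction e using Sym2.ind with
      | _ α β =>
        simp only [SimpleGraph.mem_edgeSet, Set.mem_union]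
        constructor
        · intro hadj
          by_cases hα : α ∈ S
          · exact Or.inr (hE2sub α β hadj hα)
          · by_cases hβ : β ∈ S
            · exact Or.inr (Sym2.eq_swap ▸ hE2sub β α hadj.symm hβ)
            · exact Or.inl ⟨s(⟨α,hα⟩,⟨β,hβ⟩), hadj, rfl⟩
        · rintro (⟨e', he', heq⟩ | he)
          · induction e' using Sym2.ind with
            | _ u w =>
              rw [Sym2.map_pair_eq, Sym2.eq_iff] at heq
              rcases heq with ⟨rfl, rfl⟩ | ⟨rfl, rfl⟩
              · exact he'
              · exact ((SimpleGraph.mem_edgeSet (G := G')).mp he').symm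
          · simp only [hE2, Set.mem_insert_iff, Set.mem_singleton_iff] at he
            rcases he with h | h | h | h | h <;>
              rcases Sym2.eq_iff.mp h with ⟨rfl, rfl⟩ | ⟨rfl, rfl⟩
            · exact hAvw1
            · exact hAvw1.symm
            · exact hAvw2
            · exact hAvw2.symm
            · exact hAw1x
            · exact hAw1x.symm
            · exact hAw2y1
            · exact hAw2y1.symm
            · exact hAw2y2
            · exact hAw2y2.symm
    have hE1mem : ∀ e ∈ E1, ∀ z ∈ e, z ∈ Sᶜ := by
      rintro e ⟨e', he', rfl⟩ z hz
      rw [Sym2.mem_map] at hz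
      obtain ⟨u, _, rfl⟩ := hz
      exact u.2
    have hdisj : Disjoint E1 E2 := by
      rw [Set.disjoint_left]
      intro e he1 he2
      simp only [hE2, Set.mem_insert_iff, Set.mem_singleton_iff] at he2
      rcases he2 with rfl | rfl | rfl | rfl | rfl
      · exact hE1mem _ he1 v (Sym2.mem_mk_left _ _) (by simp [hS])
      · exact hE1mem _ he1 v (Sym2.mem_mk_left _ _) (by simp [hS])
      · exact hE1mem _ he1 w1 (Sym2.mem_mk_left _ _) (by simp [hS])
      · exact hE1mem _ he1 w2 (Sym2.mem_mk_left _ _) (by simp [hS])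
      · exact hE1mem _ he1 w2 (Sym2.mem_mk_left _ _) (by simp [hS])
    have hE1card : E1.ncard = 5 * k - 5 := by
      rw [hE1, Set.ncard_image_of_injective _ (Sym2.map.injective hinj)]
      exact good'.edges
    have hE2card : E2.ncard = 5 := by
      rw [hE2]
      rw [Set.ncard_insert_of_notMem (by simp [Sym2.eq_iff, hvw1, hvw2, hw12, hw1v, hw2v,
          hxv, hxw1, hvx, hw1x, hy1v, hy1w2, hvy1, hw2y1, hy2v, hy2w2, hvy2, hw2y2'])
          (Set.toFinite _),
        Set.ncard_insert_of_notMem (by simp [Sym2.eq_iff, hvw1, hvw2, hw12, hw2w1, hxv,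
          hxw2, hvx, hw2x, hy1v, hy1w2, hvy1, hw2y1, hy2v, hy2w2, hvy2, hw2y2'])
          (Set.toFinite _),
        Set.ncard_insert_of_notMem (by simp [Sym2.eq_iff, hw12, hw2w1, hxw2, hw2x, hy1w1,
          hy1x, hw1y1, hxy1, hy2w1, hy2x, hw1y2, hxy2]) (Set.toFinite _),
        Set.ncard_insert_of_notMem (by simp [Sym2.eq_iff, hy12, hy21, hw2y1, hw2y2',
          hy1w2, hy2w2]) (Set.toFinite _),
        Set.ncard_singleton]
    rw [numEdges, hE, Set.ncard_union_eq hdisj (Set.toFinite _) (Set.toFinite _),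
      hE1card, hE2card]
    omega
  -- minimum degree
  have hpair_le : ∀ (z α β : V), G.Adj z α → G.Adj z β → α ≠ β → 2 ≤ deg G z := by
    intro z α β h1 h2 hne
    have hsub : ({α, β} : Set V) ⊆ G.neighborSet z := by
      rintro u (rfl | rfl) <;> assumption
    calc 2 = ({α, β} : Set V).ncard := (Set.ncard_pair hne).symm
    _ ≤ _ := Set.ncard_le_ncard hsub (Set.toFinite _)
  have hdeg_ge : ∀ (z : V) (hz : z ∉ S), deg G' ⟨z, hz⟩ ≤ deg G z := by
    intro z hz
    have himg : ι '' (G'.neighborSet ⟨z, hz⟩) ⊆ G.neighborSet z := by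
      rintro u ⟨u', hu', rfl⟩; exact hu'
    calc deg G' ⟨z, hz⟩ = (ι '' (G'.neighborSet ⟨z, hz⟩)).ncard :=
          (Set.ncard_image_of_injective _ hinj).symm
    _ ≤ deg G z := Set.ncard_le_ncard himg (Set.toFinite _)
  have hmindeg : ∀ z, 2 ≤ deg G z := by
    intro z
    by_cases hz : z ∈ S
    · simp only [hS, Set.mem_insert_iff, Set.mem_singleton_iff] at hz
      rcases hz with h | h | h
      · exact h ▸ hpair_le v w1 w2 hAvw1 hAvw2 hw12
      · exact h ▸ hpair_le w1 v x hAvw1.symm hAw1x hvx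
      · exact h ▸ hpair_le w2 v y1 hAvw2.symm hAw2y1 hvy1
    · exact le_trans (good'.mindeg _) (hdeg_ge z hz)
  -- independence number
  have hindep : _root_.indepNum G = k + 1 := by
    apply le_antisymm
    · apply indepNum_le
      intro T hTf hTi
      set s'' : Set ↥Sᶜ := Subtype.val ⁻¹' T with hs''
      have him : Subtype.val '' s'' = Sᶜ ∩ T := Subtype.image_preimage_coe _ _
      have hs''c : s''.ncard = (T ∩ Sᶜ).ncard := by
        rw [Set.inter_comm, ← him, Set.ncard_image_of_injective _ Subtype.val_injective]
      have hs''i : ∀ a ∈ s'', ∀ b ∈ s'', ¬ G'.Adj a b := fun a ha b hb hab =>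
        hTi _ ha _ hb hab
      have hsplit : T.ncard ≤ (T ∩ S).ncard + (T ∩ Sᶜ).ncard := by
        calc T.ncard = ((T ∩ S) ∪ (T ∩ Sᶜ)).ncard := by rw [Set.inter_union_compl]
        _ ≤ _ := Set.ncard_union_le _ _
      by_cases hw12T : w1 ∈ T ∧ w2 ∈ T
      · obtain ⟨hw1T, hw2T⟩ := hw12T
        have hvT : v ∉ T := fun h => hTi v h w1 hw1T hAvw1
        have hxT : x ∉ T := fun h => hTi w1 hw1T x h hAw1x
        have hy1T : y1 ∉ T := fun h => hTi w2 hw2T y1 h hAw2y1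
        have hy2T : y2 ∉ T := fun h => hTi w2 hw2T y2 h hAw2y2
        have hTS2 : (T ∩ S).ncard ≤ 2 := by
          have hsub : T ∩ S ⊆ {w1, w2} := by
            rintro u ⟨huT, huS⟩
            simp only [hS, Set.mem_insert_iff, Set.mem_singleton_iff] at huS
            rcases huS with rfl | rfl | rfl
            · exact absurd huT hvT
            · exact Set.mem_insert _ _
            · exact Set.mem_insert_of_mem _ rfl
          exact le_trans (Set.ncard_le_ncard hsub (Set.toFinite _))
            (le_of_eq (Set.ncard_pair hw12))
        have hins : ∀ a ∈ insert ⟨x, hx⟩ s'', ∀ b ∈ insert ⟨x, hx⟩ s'', ¬ G'.Adj a b := by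
          have hxnbr : ∀ b ∈ s'', ¬ G'.Adj ⟨x, hx⟩ b := by
            intro b hb hab
            rcases (hxnb ↑b).mp hab with h | h | h
            · exact b.2 (by simp [hS, h])
            · exact hy1T (h ▸ hb)
            · exact hy2T (h ▸ hb)
          intro a ha b hb hab
          rcases ha with rfl | ha <;> rcases hb with rfl | hb
          · exact G'.irrefl hab
          · exact hxnbr b hb hab
          · exact hxnbr a ha hab.symm
          · exact hs''i a ha b hb hab
        have hxs'' : (⟨x, hx⟩ : ↥Sᶜ) ∉ s'' := fun h => hxT h
        have hle : (insert (⟨x, hx⟩ : ↥Sᶜ) s'').ncard ≤ k := by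
          rw [← good'.indep]; exact le_indepNum G' _ hins
        rw [Set.ncard_insert_of_notMem hxs'' (Set.toFinite _)] at hle
        omega
      · have hTS1 : (T ∩ S).ncard ≤ 1 := by
          have hone : ∃ u0, T ∩ S ⊆ {u0} := by
            by_cases hvT : v ∈ T
            · refine ⟨v, ?_⟩
              rintro u ⟨huT, huS⟩
              simp only [hS, Set.mem_insert_iff, Set.mem_singleton_iff] at huS
              rcases huS with rfl | rfl | rfl
              · rfl
              · exact ((fun h => hTi v hvT u huT h) hAvw1).elim
              · exact ((fun h => hTi v hvT u huT h) hAvw2).elim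
            · by_cases hw1T : w1 ∈ T
              · refine ⟨w1, ?_⟩
                rintro u ⟨huT, huS⟩
                simp only [hS, Set.mem_insert_iff, Set.mem_singleton_iff] at huS
                rcases huS with rfl | rfl | rfl
                · exact absurd huT hvT
                · rfl
                · exact absurd ⟨hw1T, huT⟩ hw12T
              · refine ⟨w2, ?_⟩
                rintro u ⟨huT, huS⟩
                simp only [hS, Set.mem_insert_iff, Set.mem_singleton_iff] at huS
                rcases huS with rfl | rfl | rfl
                · exact absurd huT hvT
                · exact absurd huT hw1T
                · rfl
          obtain ⟨u0, hu0⟩ := hone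
          exact le_trans (Set.ncard_le_ncard hu0 (Set.toFinite _))
            (le_of_eq (Set.ncard_singleton _))
        have hle : (T ∩ Sᶜ).ncard ≤ k := by
          rw [← hs''c, ← good'.indep]; exact le_indepNum G' s'' hs''i
        omega
    · obtain ⟨s₀, hs₀i, hs₀c⟩ := exists_max_indep G'
      rw [good'.indep] at hs₀c
      set T0 : Set V := Subtype.val '' s₀ with hT0
      have hT0c : T0.ncard = k := by
        rw [hT0, Set.ncard_image_of_injective _ Subtype.val_injective, hs₀c]
      have hT0S : ∀ u ∈ T0, u ∉ S := by rintro u ⟨u', _, rfl⟩; exact u'.2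
      have hT0i : ∀ a ∈ T0, ∀ b ∈ T0, ¬ G.Adj a b := by
        rintro a ⟨a', ha', rfl⟩ b ⟨b', hb', rfl⟩ h
        exact hs₀i a' ha' b' hb' h
      by_cases hxT0 : (⟨x, hx⟩ : ↥Sᶜ) ∈ s₀
      · have hvT0 : v ∉ T0 := fun h => hT0S v h (by simp [hS])
        have hins : ∀ a ∈ insert v T0, ∀ b ∈ insert v T0, ¬ G.Adj a b := by
          have hvnbr : ∀ b ∈ T0, ¬ G.Adj v b := by
            intro b hb hab
            rcases (hv b).mp hab with h | h
            · exact hT0S b hb (by rw [hS, h]; simp)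
            · exact hT0S b hb (by rw [hS, h]; simp)
          intro a ha b hb hab
          rcases ha with rfl | ha <;> rcases hb with rfl | hb
          · exact G.irrefl hab
          · exact hvnbr b hb hab
          · exact hvnbr a ha hab.symm
          · exact hT0i a ha b hb hab
        have hle := le_indepNum G (insert v T0) hins
        rw [Set.ncard_insert_of_notMem hvT0 (Set.toFinite _), hT0c] at hle
        exact hle
      · have hxT0' : x ∉ T0 := by
          rintro ⟨u', hu', hu''⟩
          exact hxT0 (by rwa [show u' = ⟨x, hx⟩ from Subtype.ext hu''] at hu')
        have hw1T0 : w1 ∉ T0 := fun h => hT0S w1 h (by simp [hS])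
        have hins : ∀ a ∈ insert w1 T0, ∀ b ∈ insert w1 T0, ¬ G.Adj a b := by
          have hw1nbr : ∀ b ∈ T0, ¬ G.Adj w1 b := by
            intro b hb hab
            rcases (hw1 b).mp hab with h | h
            · exact hT0S b hb (by rw [hS, h]; simp)
            · exact hxT0' (h ▸ hb)
          intro a ha b hb hab
          rcases ha with rfl | ha <;> rcases hb with rfl | hb
          · exact G.irrefl hab
          · exact hw1nbr b hb hab
          · exact hw1nbr a ha hab.symm
          · exact hT0i a ha b hb hab
        have hle := le_indepNum G (insert w1 T0) hins
        rw [Set.ncard_insert_of_notMem hw1T0 (Set.toFinite _), hT0c] at hle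
        exact hle
  -- 4-cycles
  set F : (↥Sᶜ × ↥Sᶜ × ↥Sᶜ × ↥Sᶜ) → V × V × V × V :=
    fun p => (↑p.1, ↑p.2.1, ↑p.2.2.1, ↑p.2.2.2) with hF
  have hFinj : Function.Injective F := by
    rintro ⟨a, b, c, d⟩ ⟨a', b', c', d'⟩ h
    simp only [hF, Prod.mk.injEq] at h
    obtain ⟨h1, h2, h3, h4⟩ := h
    simp only [Prod.mk.injEq]
    exact ⟨Subtype.ext h1, Subtype.ext h2, Subtype.ext h3, Subtype.ext h4⟩
  set Old := F '' {p | IsC4 G' p} with hOld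
  set Eight : Set (V × V × V × V) :=
    {(w2,y1,x,y2), (y1,x,y2,w2), (x,y2,w2,y1), (y2,w2,y1,x),
     (w2,y2,x,y1), (y2,x,y1,w2), (x,y1,w2,y2), (y1,w2,y2,x)} with hEight
  have hv4 : ∀ a b c d : V, IsC4 G (a, b, c, d) → a ≠ v := by
    rintro a b c d ⟨h1, h2, h3, h4, h5, h6⟩ rfl
    rcases (hv b).mp h1 with rfl | rfl <;> rcases (hv d).mp h4.symm with rfl | rfl
    · exact h6 rfl
    · rcases (hw1 c).mp h2 with rfl | rfl
      · exact h5 rfl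
      · exact hnAxw2 h3
    · rcases (hw1 c).mp h3.symm with rfl | rfl
      · exact h5 rfl
      · exact hnAxw2 h2.symm
    · exact h6 rfl
  have hv4' : ∀ p : V × V × V × V, IsC4 G p →
      p.1 ≠ v ∧ p.2.1 ≠ v ∧ p.2.2.1 ≠ v ∧ p.2.2.2 ≠ v := by
    rintro ⟨a, b, c, d⟩ hp
    have r1 := isC4_rot hp
    have r2 := isC4_rot r1
    have r3 := isC4_rot r2
    exact ⟨hv4 _ _ _ _ hp, hv4 _ _ _ _ r1, hv4 _ _ _ _ r2, hv4 _ _ _ _ r3⟩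
  have hw14 : ∀ a b c d : V, IsC4 G (a, b, c, d) → a ≠ w1 := by
    rintro a b c d hp rfl
    obtain ⟨-, hbv, -, hdv⟩ := hv4' _ hp
    obtain ⟨h1, h2, h3, h4, h5, h6⟩ := hp
    rcases (hw1 b).mp h1 with h | h
    · exact hbv h
    · rcases (hw1 d).mp h4.symm with h' | h'
      · exact hdv h'
      · exact h6 (h.trans h'.symm)
  have hw14' : ∀ p : V × V × V × V, IsC4 G p →
      p.1 ≠ w1 ∧ p.2.1 ≠ w1 ∧ p.2.2.1 ≠ w1 ∧ p.2.2.2 ≠ w1 := by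
    rintro ⟨a, b, c, d⟩ hp
    have r1 := isC4_rot hp
    have r2 := isC4_rot r1
    have r3 := isC4_rot r2
    exact ⟨hw14 _ _ _ _ hp, hw14 _ _ _ _ r1, hw14 _ _ _ _ r2, hw14 _ _ _ _ r3⟩
  have hw2case : ∀ b c d : V, IsC4 G (w2, b, c, d) →
      (b = y1 ∧ c = x ∧ d = y2) ∨ (b = y2 ∧ c = x ∧ d = y1) := by
    intro b c d hp
    obtain ⟨-, hbv, hcv, hdv⟩ := hv4' _ hp
    obtain ⟨-, hbw1, hcw1, hdw1⟩ := hw14' _ hp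
    obtain ⟨h1, h2, h3, h4, h5, h6⟩ := hp
    have hcS : c ∉ S := by
      simp only [hS, Set.mem_insert_iff, Set.mem_singleton_iff]
      push_neg
      exact ⟨hcv, hcw1, fun h => h5 h.symm⟩
    have hb' : b = y1 ∨ b = y2 := by
      rcases (hw2nb b).mp h1 with h | h | h
      · exact (hbv h).elim
      · exact Or.inl h
      · exact Or.inr h
    have hd' : d = y1 ∨ d = y2 := by
      rcases (hw2nb d).mp h4.symm with h | h | h
      · exact (hdv h).elim
      · exact Or.inl h
      · exact Or.inr h
    rcases hb' with rfl | rfl <;> rcases hd' with rfl | rfl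
    · exact (h6 rfl).elim
    · left
      refine ⟨rfl, ?_, rfl⟩
      have hcx := good'.biv ⟨x, hx⟩ a0 b0 ⟨c, hcS⟩ hdeg hAxy1 hAxy2 hab0 h2.symm h3
      exact congrArg Subtype.val hcx
    · right
      refine ⟨rfl, ?_, rfl⟩
      have hcx := good'.biv ⟨x, hx⟩ a0 b0 ⟨c, hcS⟩ hdeg hAxy1 hAxy2 hab0 h3 h2.symm
      exact congrArg Subtype.val hcx
    · exact (h6 rfl).elim
  have hmeet : ∀ p : V × V × V × V, IsC4 G p →
      (p.1 ∈ S ∨ p.2.1 ∈ S ∨ p.2.2.1 ∈ S ∨ p.2.2.2 ∈ S) → p ∈ Eight := by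
    rintro ⟨a, b, c, d⟩ hp hmem
    have e1 := hv4' _ hp
    have e2 := hw14' _ hp
    have hred : a = w2 ∨ b = w2 ∨ c = w2 ∨ d = w2 := by
      simp only [hS, Set.mem_insert_iff, Set.mem_singleton_iff] at hmem
      obtain ⟨ea1, ea2, ea3, ea4⟩ := e1
      obtain ⟨eb1, eb2, eb3, eb4⟩ := e2
      rcases hmem with (h | h | h) | (h | h | h) | (h | h | h) | (h | h | h)
      · exact (ea1 h).elim
      · exact (eb1 h).elim
      · exact Or.inl h
      · exact (ea2 h).elim
      · exact (eb2 h).elim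
      · exact Or.inr (Or.inl h)
      · exact (ea3 h).elim
      · exact (eb3 h).elim
      · exact Or.inr (Or.inr (Or.inl h))
      · exact (ea4 h).elim
      · exact (eb4 h).elim
      · exact Or.inr (Or.inr (Or.inr h))
    have hmem8 : ∀ q : V × V × V × V, (q = (w2,y1,x,y2) ∨ q = (y1,x,y2,w2) ∨
        q = (x,y2,w2,y1) ∨ q = (y2,w2,y1,x) ∨ q = (w2,y2,x,y1) ∨ q = (y2,x,y1,w2) ∨
        q = (x,y1,w2,y2) ∨ q = (y1,w2,y2,x)) → q ∈ Eight := by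
      intro q hq
      simp only [hEight, Set.mem_insert_iff, Set.mem_singleton_iff]
      exact hq
    rcases hred with rfl | rfl | rfl | rfl
    · rcases hw2case _ _ _ hp with ⟨rfl, rfl, rfl⟩ | ⟨rfl, rfl, rfl⟩
      · exact hmem8 _ (Or.inl rfl)
      · exact hmem8 _ (Or.inr (Or.inr (Or.inr (Or.inr (Or.inl rfl)))))
    · rcases hw2case _ _ _ (isC4_rot hp) with ⟨rfl, rfl, rfl⟩ | ⟨rfl, rfl, rfl⟩
      · exact hmem8 _ (Or.inr (Or.inr (Or.inr (Or.inl rfl))))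
      · exact hmem8 _ (Or.inr (Or.inr (Or.inr (Or.inr (Or.inr (Or.inr (Or.inr rfl)))))))
    · rcases hw2case _ _ _ (isC4_rot (isC4_rot hp)) with ⟨rfl, rfl, rfl⟩ | ⟨rfl, rfl, rfl⟩
      · exact hmem8 _ (Or.inr (Or.inr (Or.inl rfl)))
      · exact hmem8 _ (Or.inr (Or.inr (Or.inr (Or.inr (Or.inr (Or.inr (Or.inl rfl)))))))
    · rcases hw2case _ _ _ (isC4_rot (isC4_rot (isC4_rot hp))) with
        ⟨rfl, rfl, rfl⟩ | ⟨rfl, rfl, rfl⟩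
      · exact hmem8 _ (Or.inr (Or.inl rfl))
      · exact hmem8 _ (Or.inr (Or.inr (Or.inr (Or.inr (Or.inr (Or.inl rfl))))))
  have hEightC4 : ∀ p ∈ Eight, IsC4 G p := by
    intro p hp
    have base1 : IsC4 G (w2, y1, x, y2) := ⟨hAw2y1, hAxy1.symm, hAxy2, hAw2y2.symm, hw2x, hy12⟩
    have base2 : IsC4 G (w2, y2, x, y1) := ⟨hAw2y2, hAxy2.symm, hAxy1, hAw2y1.symm, hw2x, hy21⟩
    simp only [hEight, Set.mem_insert_iff, Set.mem_singleton_iff] at hp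
    rcases hp with rfl | rfl | rfl | rfl | rfl | rfl | rfl | rfl
    exacts [base1, isC4_rot base1, isC4_rot (isC4_rot base1),
      isC4_rot (isC4_rot (isC4_rot base1)), base2, isC4_rot base2,
      isC4_rot (isC4_rot base2), isC4_rot (isC4_rot (isC4_rot base2))]
  have hsetC4 : {p : V × V × V × V | IsC4 G p} = Old ∪ Eight := by
    ext p
    simp only [Set.mem_setOf_eq, Set.mem_union]
    constructor
    · intro hp
      by_cases hS4 : p.1 ∈ S ∨ p.2.1 ∈ S ∨ p.2.2.1 ∈ S ∨ p.2.2.2 ∈ S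
      · exact Or.inr (hmeet p hp hS4)
      · push_neg at hS4
        obtain ⟨ha, hb, hc, hd⟩ := hS4
        obtain ⟨pa, pb, pc, pd⟩ := p
        obtain ⟨h1, h2, h3, h4, h5, h6⟩ := hp
        refine Or.inl ⟨(⟨pa, ha⟩, ⟨pb, hb⟩, ⟨pc, hc⟩, ⟨pd, hd⟩),
          ⟨h1, h2, h3, h4, fun h => h5 (congrArg Subtype.val h),
            fun h => h6 (congrArg Subtype.val h)⟩, rfl⟩
    · rintro (⟨⟨qa, qb, qc, qd⟩, hq, rfl⟩ | hp)
      · obtain ⟨h1, h2, h3, h4, h5, h6⟩ := hq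
        exact ⟨h1, h2, h3, h4, fun h => h5 (Subtype.ext h), fun h => h6 (Subtype.ext h)⟩
      · exact hEightC4 p hp
  have hOldS : ∀ p ∈ Old, p.1 ∉ S ∧ p.2.1 ∉ S ∧ p.2.2.1 ∉ S ∧ p.2.2.2 ∉ S := by
    rintro p ⟨⟨qa, qb, qc, qd⟩, -, rfl⟩
    exact ⟨qa.2, qb.2, qc.2, qd.2⟩
  have hw2S : w2 ∈ S := by simp [hS]
  have hdisjC4 : Disjoint Old Eight := by
    rw [Set.disjoint_left]
    intro p hpO hpE
    obtain ⟨n1, n2, n3, n4⟩ := hOldS p hpO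
    simp only [hEight, Set.mem_insert_iff, Set.mem_singleton_iff] at hpE
    rcases hpE with rfl | rfl | rfl | rfl | rfl | rfl | rfl | rfl
    · exact n1 hw2S
    · exact n4 hw2S
    · exact n3 hw2S
    · exact n2 hw2S
    · exact n1 hw2S
    · exact n4 hw2S
    · exact n3 hw2S
    · exact n2 hw2S
  have hOldcard : Old.ncard = 8 * (k - 2) := by
    rw [hOld, Set.ncard_image_of_injective _ hFinj]
    exact good'.c4
  have hEightcard : Eight.ncard = 8 := by
    rw [hEight]
    rw [Set.ncard_insert_of_notMem (by simp [Prod.ext_iff, hw2x, hxw2, hy12, hy21, hw2y1,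
        hy1w2, hw2y2', hy2w2, hxy1, hy1x, hxy2, hy2x]) (Set.toFinite _),
      Set.ncard_insert_of_notMem (by simp [Prod.ext_iff, hw2x, hxw2, hy12, hy21, hw2y1,
        hy1w2, hw2y2', hy2w2, hxy1, hy1x, hxy2, hy2x]) (Set.toFinite _),
      Set.ncard_insert_of_notMem (by simp [Prod.ext_iff, hw2x, hxw2, hy12, hy21, hw2y1,
        hy1w2, hw2y2', hy2w2, hxy1, hy1x, hxy2, hy2x]) (Set.toFinite _),
      Set.ncard_insert_of_notMem (by simp [Prod.ext_iff, hw2x, hxw2, hy12, hy21, hw2y1,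
        hy1w2, hw2y2', hy2w2, hxy1, hy1x, hxy2, hy2x]) (Set.toFinite _),
      Set.ncard_insert_of_notMem (by simp [Prod.ext_iff, hw2x, hxw2, hy12, hy21, hw2y1,
        hy1w2, hw2y2', hy2w2, hxy1, hy1x, hxy2, hy2x]) (Set.toFinite _),
      Set.ncard_insert_of_notMem (by simp [Prod.ext_iff, hw2x, hxw2, hy12, hy21, hw2y1,
        hy1w2, hw2y2', hy2w2, hxy1, hy1x, hxy2, hy2x]) (Set.toFinite _),
      Set.ncard_insert_of_notMem (by simp [Prod.ext_iff, hw2x, hxw2, hy12, hy21, hw2y1,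
        hy1w2, hw2y2', hy2w2, hxy1, hy1x, hxy2, hy2x]) (Set.toFinite _),
      Set.ncard_singleton]
  have hc4count : {p : V × V × V × V | IsC4 G p}.ncard = 8 * ((k + 1) - 2) := by
    rw [hsetC4, Set.ncard_union_eq hdisjC4 (Set.toFinite _) (Set.toFinite _),
      hOldcard, hEightcard]
    omega
  -- degree computations
  have hNw2 : G.neighborSet w2 = {v, y1, y2} := by
    ext u
    simp only [SimpleGraph.mem_neighborSet, hw2nb u, Set.mem_insert_iff, Set.mem_singleton_iff]
  have hdw2 : deg G w2 = 3 := by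
    rw [deg, hNw2, Set.ncard_insert_of_notMem (by simp [hvy1, hvy2]) (Set.toFinite _),
      Set.ncard_pair hy12]
  have hNx : G.neighborSet x = {w1, y1, y2} := by
    ext u
    simp only [SimpleGraph.mem_neighborSet, hxnb u, Set.mem_insert_iff, Set.mem_singleton_iff]
  have hdx : deg G x = 3 := by
    rw [deg, hNx, Set.ncard_insert_of_notMem (by simp [hw1y1, hw1y2]) (Set.toFinite _),
      Set.ncard_pair hy12]
  have htriple_le : ∀ (z α β γ : V), G.Adj z α → G.Adj z β → G.Adj z γ →
      α ≠ β → α ≠ γ → β ≠ γ → 3 ≤ deg G z := by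
    intro z α β γ h1 h2 h3 n1 n2 n3
    have hsub : ({α, β, γ} : Set V) ⊆ G.neighborSet z := by
      rintro u (rfl | rfl | rfl) <;> assumption
    calc 3 = ({α, β, γ} : Set V).ncard := by
          rw [Set.ncard_insert_of_notMem (by simp [n1, n2]) (Set.toFinite _),
            Set.ncard_pair n3]
    _ ≤ _ := Set.ncard_le_ncard hsub (Set.toFinite _)
  have hydeg : ∀ (yy : ↥Sᶜ), G.Adj x ↑yy → G.Adj w2 ↑yy → 3 ≤ deg G ↑yy := by
    intro yy hxyy hw2yy
    have h2d := good'.mindeg yy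
    rw [deg] at h2d
    obtain ⟨u1, u2, hu1, hu2, hu12⟩ := (Set.one_lt_ncard_iff (s := G'.neighborSet yy) (Set.toFinite _)).mp (by omega)
    refine htriple_le ↑yy ↑u1 ↑u2 w2 hu1 hu2 hw2yy.symm
      (fun h => hu12 (Subtype.ext h)) ?_ ?_
    · exact fun h => (h ▸ u1.2 : w2 ∉ S) hw2S
    · exact fun h => (h ▸ u2.2 : w2 ∉ S) hw2S
  have hy1deg : 3 ≤ deg G y1 := hydeg a0 hAxy1 hAw2y1
  have hy2deg : 3 ≤ deg G y2 := hydeg b0 hAxy2 hAw2y2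
  -- the bivalent-vertex property
  have hbiv : ∀ z α β γ, deg G z = 2 → G.Adj z α → G.Adj z β → α ≠ β →
      G.Adj γ α → G.Adj γ β → γ = z := by
    intro z α β γ hdz hα hβ hne hγα hγβ
    have hnAw2x : ¬ G.Adj w2 x := fun h => hnAxw2 h.symm
    by_cases hz : z ∈ S
    · simp only [hS, Set.mem_insert_iff, Set.mem_singleton_iff] at hz
      rcases hz with rfl | rfl | rfl
      · -- z = v
        rcases (hv α).mp hα with rfl | rfl <;> rcases (hv β).mp hβ with rfl | rfl
        · exact (hne rfl).elim
        · rcases (hw1 γ).mp hγα.symm with rfl | rfl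
          · rfl
          · exact (hnAxw2 hγβ).elim
        · rcases (hw1 γ).mp hγβ.symm with rfl | rfl
          · rfl
          · exact (hnAxw2 hγα).elim
        · exact (hne rfl).elim
      · -- z = w1
        rcases (hw1 α).mp hα with rfl | rfl <;> rcases (hw1 β).mp hβ with rfl | rfl
        · exact (hne rfl).elim
        · rcases (hv γ).mp hγα.symm with rfl | rfl
          · rfl
          · exact (hnAw2x hγβ).elim
        · rcases (hv γ).mp hγβ.symm with rfl | rfl
          · rfl
          · exact (hnAw2x hγα).elim
        · exact (hne rfl).elim
      · -- z = w2 : impossible degree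
        rw [hdw2] at hdz
        exact absurd hdz (by norm_num)
    · by_cases hzx : z = x
      · rw [hzx, hdx] at hdz
        exact absurd hdz (by norm_num)
      · by_cases hzy1 : z = y1
        · rw [hzy1] at hdz
          omega
        · by_cases hzy2 : z = y2
          · rw [hzy2] at hdz
            omega
          · -- generic old vertex
            have hnbrS : ∀ u, G.Adj z u → u ∉ S := by
              intro u hu hus
              simp only [hS, Set.mem_insert_iff, Set.mem_singleton_iff] at hus
              rcases hus with rfl | rfl | rfl
              · rcases (hv z).mp hu.symm with h | h
                · exact hz (by rw [h]; simp [hS])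
                · exact hz (by rw [h]; simp [hS])
              · rcases (hw1 z).mp hu.symm with h | h
                · exact hz (by rw [h]; simp [hS])
                · exact hzx h
              · rcases (hw2nb z).mp hu.symm with h | h | h
                · exact hz (by rw [h]; simp [hS])
                · exact hzy1 h
                · exact hzy2 h
            have hαS : α ∉ S := hnbrS α hα
            have hβS : β ∉ S := hnbrS β hβ
            have hdegz' : deg G' ⟨z, hz⟩ = 2 := by
              have himg : ι '' (G'.neighborSet ⟨z, hz⟩) = G.neighborSet z := by
                ext u
                constructor
                · rintro ⟨u', hu', rfl⟩; exact hu'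
                · intro hu; exact ⟨⟨u, hnbrS u hu⟩, hu, rfl⟩
              calc deg G' ⟨z, hz⟩ = (ι '' (G'.neighborSet ⟨z, hz⟩)).ncard :=
                    (Set.ncard_image_of_injective _ hinj).symm
              _ = deg G z := by rw [himg]; rfl
              _ = 2 := hdz
            by_cases hγS : γ ∈ S
            · simp only [hS, Set.mem_insert_iff, Set.mem_singleton_iff] at hγS
              rcases hγS with rfl | rfl | rfl
              · rcases (hv α).mp hγα with h | h
                · exact absurd (by rw [h]; simp [hS]) hαS
                · exact absurd (by rw [h]; simp [hS]) hαS
              · rcases (hw1 α).mp hγα with h | h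
                · exact absurd (by rw [h]; simp [hS]) hαS
                · rcases (hw1 β).mp hγβ with h' | h'
                  · exact absurd (by rw [h']; simp [hS]) hβS
                  · exact absurd (h.trans h'.symm) hne
              · -- γ = w2 : α, β are y1, y2 in some order
                have hα' : α = y1 ∨ α = y2 := by
                  rcases (hw2nb α).mp hγα with h | h | h
                  · exact absurd (by rw [h]; simp [hS]) hαS
                  · exact Or.inl h
                  · exact Or.inr h
                have hβ' : β = y1 ∨ β = y2 := by
                  rcases (hw2nb β).mp hγβ with h | h | h
                  · exact absurd (by rw [h]; simp [hS]) hβS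
                  · exact Or.inl h
                  · exact Or.inr h
                have hzx' : z = x := by
                  rcases hα' with rfl | rfl <;> rcases hβ' with rfl | rfl
                  · exact (hne rfl).elim
                  · exact congrArg Subtype.val
                      (good'.biv ⟨x, hx⟩ a0 b0 ⟨z, hz⟩ hdeg hAxy1 hAxy2 hab0 hα hβ)
                  · exact congrArg Subtype.val
                      (good'.biv ⟨x, hx⟩ a0 b0 ⟨z, hz⟩ hdeg hAxy1 hAxy2 hab0 hβ hα)
                  · exact (hne rfl).elim
                exact absurd hzx' hzx
            · exact congrArg Subtype.val
                (good'.biv ⟨z, hz⟩ ⟨α, hαS⟩ ⟨β, hβS⟩ ⟨γ, hγS⟩ hdegz' hα hβ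
                  (fun h => hne (congrArg Subtype.val h)) hγα hγβ)
  exact ⟨hfinV, hcard, hedges, hindep, hc4count, hmindeg, hbiv⟩






theorem chain_good : ∀ {V : Type} (G : SimpleGraph V) (k : ℕ),
    IsChainGraph G k → 2 ≤ k ∧ Finite V ∧ Good G k := by
  intro V G k h
  induction h with
  | base G e =>
    obtain ⟨hfin, hgood⟩ := good_base G e
    exact ⟨le_refl 2, hfin, hgood⟩
  | step G k v w1 w2 x hvw1 hvw2 hw12 hx hchain hdeg hv hw1 hw2 ih =>
    obtain ⟨hk2, hfin', good'⟩ := ih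
    obtain ⟨hfin, hgood⟩ := good_step G k v w1 w2 x hvw1 hvw2 hw12 hx hdeg hv hw1 hw2
      hk2 hfin' good'
    exact ⟨by omega, hfin, hgood⟩

/-- For `k ≥ 2` the chain graph `Ch_k` has `3k−1` vertices, `5k−5` edges, independence
number `k` and `k−2` four-cycles; consequently `ν(Ch_k) = 0`. -/
theorem stmt11 {V : Type} [Fintype V] (G : SimpleGraph V) (k : ℕ) (hk : 2 ≤ k)
    (h : IsChainGraph G k) :
    Nat.card V = 3 * k - 1 ∧ numEdges G = 5 * k - 5 ∧ _root_.indepNum G = k ∧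
      numC4 G = k - 2 ∧ nu G = 0 := by
  obtain ⟨hk2, hfin, good⟩ := chain_good G k h
  have hc4 : numC4 G = k - 2 := by
    rw [numC4, good.c4]
    omega
  refine ⟨good.card, good.edges, good.indep, hc4, ?_⟩
  rw [nu, good.card, good.edges, good.indep, hc4]
  have h1 : ((5 * k - 5 : ℕ) : ℤ) = 5 * k - 5 := by omega
  have h2 : ((3 * k - 1 : ℕ) : ℤ) = 3 * k - 1 := by omega
  have h3 : ((k - 2 : ℕ) : ℤ) = k - 2 := by omega
  rw [h1, h2, h3]; ring
end

section
/- The generalised Petersen graph GP(7,2) (two 7-cycles a_0…a_6 and b_0…b_6 joined by edges b_i a_{2i mod 7}) is triangle-free, 3-regular, has 14 vertices, 21 edges, independence number 5, girth 5, and satisfies 3·21 − 17·14 + 35·5 + 0 = 0. -/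
open SimpleGraph

/-- The generalised Petersen graph `GP(7,2)`: outer 7-cycle `a` (`Sum.inl`),
inner 7-cycle `b` (`Sum.inr`), spokes `b_i a_{2i}`. -/
def GP72 : SimpleGraph (ZMod 7 ⊕ ZMod 7) :=
  SimpleGraph.fromRel (fun x y =>
    match x, y with
    | Sum.inl i, Sum.inl j => j = i + 1
    | Sum.inr i, Sum.inr j => j = i + 1
    | Sum.inr i, Sum.inl j => j = 2 * i
    | _, _ => False)

/-! Everything except the independence number is a finite check or a one-line consequence of
one: the handshake lemma gives the 21 edges, and the girth is 5 because there is no triangle, two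
distinct vertices never have two common neighbours (so no 4-cycle), and `a₀ a₁ a₂ b₁ b₀` is a
5-cycle. For `α ≤ 5`, the seven 5-cycles `a_{2i} a_{2i+1} a_{2i+2} b_{i+1} b_i` together with the
inner 7-cycle pass exactly three times through every vertex; an independent set `S` meets each
5-cycle at most twice and the 7-cycle at most three times, so `3|S| ≤ 7·2 + 3 = 17`. -/

open Finset

section General

variable {V : Type} (G : SimpleGraph V)

lemma indepNum_eq_of_forall_card_le {k : ℕ}
    (hle : ∀ s : Finset V, (∀ a ∈ s, ∀ b ∈ s, ¬ G.Adj a b) → #s ≤ k)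
    (s₀ : Finset V) (hs₀ : ∀ a ∈ s₀, ∀ b ∈ s₀, ¬ G.Adj a b) (hcard : #s₀ = k) :
    _root_.indepNum G = k := by
  set A := {n : ℕ | ∃ s : Set V, s.Finite ∧ s.ncard = n ∧ ∀ a ∈ s, ∀ b ∈ s, ¬ G.Adj a b}
  have hbound : ∀ n ∈ A, n ≤ k := by
    rintro n ⟨s, hfin, rfl, hs⟩
    rw [Set.ncard_eq_toFinset_card s hfin]
    exact hle _ fun a ha b hb => hs a (hfin.mem_toFinset.mp ha) b (hfin.mem_toFinset.mp hb)
  have hk : k ∈ A := ⟨s₀, s₀.finite_toSet, by rw [Set.ncard_coe_finset, hcard], hs₀⟩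
  exact le_antisymm (csSup_le ⟨k, hk⟩ hbound) (le_csSup ⟨k, hbound⟩ hk)

lemma two_mul_card_filter_mem_le [DecidableEq V] {ι : Type} [Fintype ι] [DecidableEq ι]
    (f : ι → V) (σ : Equiv.Perm ι) (hf : ∀ i, G.Adj (f i) (f (σ i))) (S : Finset V)
    (hS : ∀ a ∈ S, ∀ b ∈ S, ¬ G.Adj a b) :
    2 * #{i | f i ∈ S} ≤ Fintype.card ι := by
  set A : Finset ι := {i | f i ∈ S}
  have hdisj : Disjoint A (A.map σ.toEmbedding) := by
    simp only [Finset.disjoint_left, Finset.mem_map_equiv, A, mem_filter_univ]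
    exact fun i hi hi' => hS _ hi' _ hi (by simpa using hf (σ.symm i))
  calc 2 * #A = #(A ∪ A.map σ.toEmbedding) := by
        rw [card_union_of_disjoint hdisj, card_map, two_mul]
    _ ≤ Fintype.card ι := card_le_univ _

lemma not_isC4_of_subsingleton_commonNeighbors
    (h : ∀ u w, u ≠ w → (G.commonNeighbors u w).Subsingleton) (p : V × V × V × V) :
    ¬ IsC4 G p := by
  obtain ⟨a, b, c, d⟩ := p
  rintro ⟨hab, hbc, hcd, hda, hac, hbd⟩
  exact hbd (h a c hac ⟨hab, hbc.symm⟩ ⟨hda.symm, hcd⟩)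

lemma numC4_eq_zero (h : ∀ p, ¬ IsC4 G p) : numC4 G = 0 := by
  simp only [numC4, h, Set.ofPred_false, Set.ncard_empty, Nat.zero_div]

lemma five_le_egirth (h3 : G.CliqueFree 3) (h4 : ∀ p, ¬ IsC4 G p) : 5 ≤ G.egirth := by
  classical
  rw [le_egirth]
  intro u w hw
  by_contra! hlt
  have hlen : w.length = 3 ∨ w.length = 4 := by
    have := hw.three_le_length
    have : w.length < 5 := by exact_mod_cast hlt
    omega
  have hadj : ∀ i < w.length, G.Adj (w.getVert i) (w.getVert (i + 1)) :=
    fun i hi => w.adj_getVert_succ hi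
  have hclose : w.getVert w.length = w.getVert 0 := by simp
  rcases hlen with h | h
  · rw [h] at hclose
    refine h3 {w.getVert 0, w.getVert 1, w.getVert 2} (is3Clique_triple_iff.mpr ⟨?_, ?_, ?_⟩)
    · exact hadj 0 (by omega)
    · rw [← hclose]; exact (hadj 2 (by omega)).symm
    · exact hadj 1 (by omega)
  · rw [h] at hclose
    refine h4 (w.getVert 0, w.getVert 1, w.getVert 2, w.getVert 3)
      ⟨hadj 0 (by omega), hadj 1 (by omega), hadj 2 (by omega), ?_,
        hw.getVert_sub_one_ne_getVert_add_one (i := 1) (by omega),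
        hw.getVert_sub_one_ne_getVert_add_one (i := 2) (by omega)⟩
    rw [← hclose]; exact hadj 3 (by omega)

lemma girth_eq_of_le_egirth {n : ℕ} (h : n ≤ G.egirth) {u : V} {w : G.Walk u u} (hw : w.IsCycle)
    (hlen : w.length = n) : G.girth = n := by
  have : G.egirth = n := le_antisymm (hlen ▸ egirth_le_length hw) h
  rw [girth, this, ENat.toNat_natCast]

lemma deg_eq_degree (v : V) [Fintype (G.neighborSet v)] : deg G v = G.degree v := by
  rw [deg, Set.ncard_eq_toFinset_card']
  rfl

lemma two_mul_numEdges [Fintype V] [DecidableRel G.Adj] {d : ℕ} (hG : G.IsRegularOfDegree d) :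
    2 * numEdges G = Fintype.card V * d := by
  rw [numEdges, ← coe_edgeFinset, Set.ncard_coe_finset, ← sum_degrees_eq_twice_card_edges]
  simp [hG.degree_eq]

end General

lemma Fintype.sum_comp_mul_add {K M : Type} [DivisionRing K] [Fintype K] [AddCommMonoid M]
    (f : K → M) {a : K} (ha : a ≠ 0) (b : K) : ∑ i, f (a * i + b) = ∑ i, f i :=
  ((Equiv.mulLeft₀ a ha).trans (Equiv.addRight b)).sum_comp f

instance : Fact (Nat.Prime 7) := ⟨by norm_num⟩

namespace GP72

open Sum

lemma adj_inl_inl (i j : ZMod 7) : GP72.Adj (inl i) (inl j) ↔ j = i + 1 ∨ i = j + 1 := by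
  simp only [GP72, fromRel_adj, ne_eq, inl.injEq, and_iff_right_iff_imp]
  revert i j; decide

lemma adj_inr_inr (i j : ZMod 7) : GP72.Adj (inr i) (inr j) ↔ j = i + 1 ∨ i = j + 1 := by
  simp only [GP72, fromRel_adj, ne_eq, inr.injEq, and_iff_right_iff_imp]
  revert i j; decide

lemma adj_inr_inl (i j : ZMod 7) : GP72.Adj (inr i) (inl j) ↔ j = 2 * i := by
  simp [GP72]

lemma adj_inl_inr (i j : ZMod 7) : GP72.Adj (inl j) (inr i) ↔ j = 2 * i := by
  simp [GP72]

instance : DecidableRel GP72.Adj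
  | inl i, inl j => decidable_of_iff _ (adj_inl_inl i j).symm
  | inr i, inr j => decidable_of_iff _ (adj_inr_inr i j).symm
  | inr i, inl j => decidable_of_iff _ (adj_inr_inl i j).symm
  | inl j, inr i => decidable_of_iff _ (adj_inl_inr i j).symm

lemma isRegularOfDegree : GP72.IsRegularOfDegree 3 := by
  unfold IsRegularOfDegree; decide

lemma cliqueFree_three : GP72.CliqueFree 3 := by
  have : ∀ u v w, GP72.Adj u v → GP72.Adj v w → ¬ GP72.Adj u w := by decide
  intro s hs
  obtain ⟨u, v, w, huv, huw, hvw, -⟩ := is3Clique_iff.mp hs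
  exact this u v w huv hvw huw

lemma subsingleton_commonNeighbors (u w : ZMod 7 ⊕ ZMod 7) (huw : u ≠ w) :
    (GP72.commonNeighbors u w).Subsingleton := by
  have : ∀ u w : ZMod 7 ⊕ ZMod 7, u ≠ w →
      #(GP72.neighborFinset u ∩ GP72.neighborFinset w) ≤ 1 := by decide
  intro b hb d hd
  rw [mem_commonNeighbors] at hb hd
  exact card_le_one.mp (this u w huw) b (by simp [hb]) d (by simp [hd])

def fiveCycle (i : ZMod 7) : Fin 5 → ZMod 7 ⊕ ZMod 7 :=
  ![inl (2 * i), inl (2 * i + 1), inl (2 * i + 2), inr (i + 1), inr i]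

lemma fiveCycle_adj (i : ZMod 7) (k : Fin 5) :
    GP72.Adj (fiveCycle i k) (fiveCycle i (finRotate 5 k)) := by
  revert i k; decide

lemma sum_sum_fiveCycle {M : Type} [AddCommMonoid M] (x : ZMod 7 ⊕ ZMod 7 → M) :
    ∑ i, ∑ k, x (fiveCycle i k) = 3 • ∑ j, x (inl j) + 2 • ∑ j, x (inr j) := by
  have h2 : (2 : ZMod 7) ≠ 0 := by decide
  simp only [fiveCycle, Fin.sum_univ_five, Matrix.cons_val_zero, Matrix.cons_val_one,
    Matrix.cons_val, sum_add_distrib]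
  have h0 : ∑ i, x (inl (2 * i)) = ∑ j, x (inl j) := by
    simpa using Fintype.sum_comp_mul_add (fun j => x (inl j)) h2 0
  have h1 : ∑ i, x (inr (i + 1)) = ∑ j, x (inr j) := by
    simpa using Fintype.sum_comp_mul_add (fun j => x (inr j)) one_ne_zero 1
  rw [h0, h1, Fintype.sum_comp_mul_add (fun j => x (inl j)) h2 1,
    Fintype.sum_comp_mul_add (fun j => x (inl j)) h2 2]
  abel

lemma card_le_five_of_indep (S : Finset (ZMod 7 ⊕ ZMod 7))
    (hS : ∀ a ∈ S, ∀ b ∈ S, ¬ GP72.Adj a b) : #S ≤ 5 := by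
  set x : ZMod 7 ⊕ ZMod 7 → ℕ := fun v => if v ∈ S then 1 else 0
  have hcard : #S = ∑ j, x (inl j) + ∑ j, x (inr j) := by
    rw [← Fintype.sum_sum_type x]
    simp [x]
  have hfive (i : ZMod 7) : 2 * ∑ k, x (fiveCycle i k) ≤ 5 := by
    simpa [x, sum_boole] using
      two_mul_card_filter_mem_le GP72 (fiveCycle i) (finRotate 5) (fiveCycle_adj i) S hS
  have hinner : 2 * ∑ j, x (inr j) ≤ 7 := by
    simpa [x, sum_boole] using two_mul_card_filter_mem_le GP72 inr (Equiv.addRight 1)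
      (fun j => (adj_inr_inr j (j + 1)).mpr (Or.inl rfl)) S hS
  have hcover : ∑ i, ∑ k, x (fiveCycle i k) ≤ 14 :=
    calc ∑ i, ∑ k, x (fiveCycle i k) ≤ ∑ _i : ZMod 7, 2 :=
          sum_le_sum fun i _ => by have := hfive i; omega
      _ = 14 := by simp
  rw [sum_sum_fiveCycle, smul_eq_mul, smul_eq_mul] at hcover
  omega

lemma indepNum_eq : _root_.indepNum GP72 = 5 :=
  indepNum_eq_of_forall_card_le GP72 card_le_five_of_indep {inl 0, inl 2, inl 4, inr 3, inr 5}
    (by decide) rfl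

lemma not_isC4 : ∀ p, ¬ IsC4 GP72 p :=
  not_isC4_of_subsingleton_commonNeighbors GP72 subsingleton_commonNeighbors

def pentagon : GP72.Walk (inl 0) (inl 0) :=
  .cons (by decide : GP72.Adj (inl 0) (inl 1)) <| .cons (by decide : GP72.Adj _ (inl 2)) <|
    .cons (by decide : GP72.Adj _ (inr 1)) <| .cons (by decide : GP72.Adj _ (inr 0)) <|
      .cons (by decide : GP72.Adj _ (inl 0)) .nil

lemma pentagon_isCycle : pentagon.IsCycle :=
  (Walk.cons_isCycle_iff _ _).mpr ⟨(Walk.isPath_def _).mpr (by decide), by decide⟩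

lemma girth_eq : GP72.girth = 5 :=
  girth_eq_of_le_egirth GP72 (five_le_egirth GP72 cliqueFree_three not_isC4) pentagon_isCycle rfl

lemma deg_eq (v : ZMod 7 ⊕ ZMod 7) : deg GP72 v = 3 := by
  rw [deg_eq_degree, isRegularOfDegree.degree_eq]

lemma numEdges_eq : numEdges GP72 = 21 := by
  have := two_mul_numEdges GP72 isRegularOfDegree
  simp only [Fintype.card_sum, ZMod.card] at this
  omega

end GP72

/-- `GP(7,2)` is triangle-free, 3-regular, has 14 vertices, 21 edges, independence number 5,
girth 5, no 4-cycles, and `ν = 3·21 − 17·14 + 35·5 + 0 = 0`. -/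
theorem stmt19 :
    GP72.CliqueFree 3 ∧ (∀ v, deg GP72 v = 3) ∧ Nat.card (ZMod 7 ⊕ ZMod 7) = 14 ∧
      numEdges GP72 = 21 ∧ _root_.indepNum GP72 = 5 ∧ GP72.girth = 5 ∧ numC4 GP72 = 0 ∧
      nu GP72 = 0 ∧ 3 * 21 - 17 * 14 + 35 * 5 + 0 = (0 : ℤ) := by
  have hcard : Nat.card (ZMod 7 ⊕ ZMod 7) = 14 := by simp
  have hC4 : numC4 GP72 = 0 := numC4_eq_zero GP72 GP72.not_isC4
  refine ⟨GP72.cliqueFree_three, GP72.deg_eq, hcard, GP72.numEdges_eq, GP72.indepNum_eq,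
    GP72.girth_eq, hC4, ?_, by norm_num⟩
  rw [nu, GP72.numEdges_eq, hcard, GP72.indepNum_eq, hC4]
  norm_num
end
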